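/- arXiv:2509.13819 — 3 statements merged into one kernel-verified Lean document; each statement's English description precedes it below -/
import Mathlib

section
/- Let H be a finite hypergraph and let e0 ∈ E(H). Let H' be the hypergraph obtained from H by adding two new vertices x and y (not in V(H)) and replacing the edge e0 by the two edges e_x = e0 ∪ {x} and e_y = e0 ∪ {y}. Then Maker has a winning strategy for the Maker-Breaker game on H if and only if Maker has a winning strategy for the Maker-Breaker game on H'. -/
/-!
Formalization of finite positional games (Maker-Breaker and Maker-Maker) on hypergraphs.

A position of a game is recorded by the sets of vertices picked by each player so far,
together with a fuel parameter equal to the number of vertices still unpicked, and a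
Boolean recording whose turn it is (`true` = the first player, i.e. Maker/FP, to move).
The predicates below express, by recursion on the number of remaining moves, that the
corresponding player has a winning (resp. drawing) strategy from the given position.
-/

variable {α : Type} [DecidableEq α]

/-- A finite hypergraph: a finite vertex set `V` together with a finite set `E` of edges,
each edge being a subset of `V`. -/
structure FinHypergraph (α : Type) [DecidableEq α] where
  V : Finset α
  E : Finset (Finset α)
  edge_subset : ∀ e ∈ E, e ⊆ V

/-- A set `A` of picked vertices *fills* an edge of `H` if it contains that edge. -/
def Fills (H : FinHypergraph α) (A : Finset α) : Prop := ∃ e ∈ H.E, e ⊆ A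

/-- Maker has a winning strategy in the Maker-Breaker game on `H` from the position where
Maker has picked `M`, Breaker has picked `B`, there remain `n` unpicked vertices, and it is
Maker's (`true`) resp. Breaker's (`false`) turn.  Play continues until every vertex is
picked; Maker wins if in the end her picked vertices contain some edge. -/
def makerAux (H : FinHypergraph α) : ℕ → Finset α → Finset α → Bool → Prop
  | 0, M, _, _ => Fills H M
  | n+1, M, B, true => ∃ x ∈ H.V \ (M ∪ B), makerAux H n (insert x M) B false
  | n+1, M, B, false => ∀ x ∈ H.V \ (M ∪ B), makerAux H n M (insert x B) true

/-- Maker has a winning strategy for the Maker-Breaker game on `H` (Maker moves first). -/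
def MakerWin (H : FinHypergraph α) : Prop := makerAux H H.V.card ∅ ∅ true

/-- Breaker has a winning strategy in the Maker-Breaker game on `H` from the given position
(`true`: Maker to move).  Breaker wins if in the end Maker's vertices contain no edge. -/
def breakerAux (H : FinHypergraph α) : ℕ → Finset α → Finset α → Bool → Prop
  | 0, M, _, _ => ¬ Fills H M
  | n+1, M, B, true => ∀ x ∈ H.V \ (M ∪ B), breakerAux H n (insert x M) B false
  | n+1, M, B, false => ∃ x ∈ H.V \ (M ∪ B), breakerAux H n M (insert x B) true

/-- Breaker has a winning strategy for the Maker-Breaker game on `H` (Maker moves first). -/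
def BreakerWin (H : FinHypergraph α) : Prop := breakerAux H H.V.card ∅ ∅ true

/-- The first player FP has a winning strategy in the Maker-Maker game on `H` from the
position where FP has picked `F`, SP has picked `S`, there remain `n` unpicked vertices and
it is FP's (`true`) resp. SP's (`false`) turn.  Whoever first fills an edge wins;
a position in which the opponent has already filled an edge is lost. -/
def fpAux (H : FinHypergraph α) : ℕ → Finset α → Finset α → Bool → Prop
  | 0, F, S, true => ¬ Fills H S ∧ Fills H F
  | 0, F, _, false => Fills H F
  | n+1, F, S, true => ¬ Fills H S ∧
      (Fills H F ∨ ∃ x ∈ H.V \ (F ∪ S), fpAux H n (insert x F) S false)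
  | n+1, F, S, false => Fills H F ∨
      (¬ Fills H S ∧ ∀ x ∈ H.V \ (F ∪ S), fpAux H n F (insert x S) true)

/-- FP has a winning strategy for the Maker-Maker game on `H` (FP moves first). -/
def FPWin (H : FinHypergraph α) : Prop := fpAux H H.V.card ∅ ∅ true

/-- The second player SP has a winning strategy in the Maker-Maker game on `H` from the
given position (`true`: FP to move). -/
def spAux (H : FinHypergraph α) : ℕ → Finset α → Finset α → Bool → Prop
  | 0, _, S, true => Fills H S
  | 0, F, S, false => ¬ Fills H F ∧ Fills H S
  | n+1, F, S, true => Fills H S ∨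
      (¬ Fills H F ∧ ∀ x ∈ H.V \ (F ∪ S), spAux H n (insert x F) S false)
  | n+1, F, S, false => ¬ Fills H F ∧
      (Fills H S ∨ ∃ x ∈ H.V \ (F ∪ S), spAux H n F (insert x S) true)

/-- SP has a winning strategy for the Maker-Maker game on `H` (FP moves first). -/
def SPWin (H : FinHypergraph α) : Prop := spAux H H.V.card ∅ ∅ true

/-- FP has a *drawing* strategy in the Maker-Maker game on `H` from the given position:
FP can guarantee that SP does not win (FP winning, or nobody winning, are both fine). -/
def fpDrawAux (H : FinHypergraph α) : ℕ → Finset α → Finset α → Bool → Prop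
  | 0, _, S, true => ¬ Fills H S
  | 0, F, S, false => Fills H F ∨ ¬ Fills H S
  | n+1, F, S, true => ¬ Fills H S ∧
      (Fills H F ∨ ∃ x ∈ H.V \ (F ∪ S), fpDrawAux H n (insert x F) S false)
  | n+1, F, S, false => Fills H F ∨
      (¬ Fills H S ∧ ∀ x ∈ H.V \ (F ∪ S), fpDrawAux H n F (insert x S) true)

/-- FP has a drawing strategy for the Maker-Maker game on `H` (FP moves first). -/
def FPDraw (H : FinHypergraph α) : Prop := fpDrawAux H H.V.card ∅ ∅ true

/-- SP has a *drawing* strategy in the Maker-Maker game on `H` from the given position: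
SP can guarantee that FP does not win (SP winning, or nobody winning, are both fine). -/
def spDrawAux (H : FinHypergraph α) : ℕ → Finset α → Finset α → Bool → Prop
  | 0, F, S, true => Fills H S ∨ ¬ Fills H F
  | 0, F, _, false => ¬ Fills H F
  | n+1, F, S, true => Fills H S ∨
      (¬ Fills H F ∧ ∀ x ∈ H.V \ (F ∪ S), spDrawAux H n (insert x F) S false)
  | n+1, F, S, false => ¬ Fills H F ∧
      (Fills H S ∨ ∃ x ∈ H.V \ (F ∪ S), spDrawAux H n F (insert x S) true)

/-- SP has a drawing strategy for the Maker-Maker game on `H` (FP moves first). -/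
def SPDraw (H : FinHypergraph α) : Prop := spDrawAux H H.V.card ∅ ∅ true

/-!
The two new vertices act as a pair. If Maker wins on `H`, she wins on `H'` by following her
strategy there and answering a Breaker move on `x` or `y` with the other one of the pair: she ends
up owning `x` or `y`, so filling `e0` fills `insert x e0` or `insert y e0`. Conversely, when
Maker's strategy on `H'` takes `x`, she pretends that Breaker answered `y`; from then on
`insert y e0` is dead, `insert x e0` is filled exactly when `e0` is, and the game on `H'` is the
game on `H`.
-/

structure IsEdgeEnlargement (H H' : FinHypergraph α) (e0 : Finset α) (x y : α) : Prop where
  mem_edges : e0 ∈ H.E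
  left_notMem : x ∉ H.V
  right_notMem : y ∉ H.V
  ne : x ≠ y
  vertices_eq : H'.V = insert x (insert y H.V)
  edges_eq : H'.E = insert (insert x e0) (insert (insert y e0) (H.E.erase e0))

namespace IsEdgeEnlargement

open Finset

variable {H H' : FinHypergraph α} {e0 : Finset α} {x y : α}

theorem symm (h : IsEdgeEnlargement H H' e0 x y) : IsEdgeEnlargement H H' e0 y x where
  mem_edges := h.mem_edges
  left_notMem := h.right_notMem
  right_notMem := h.left_notMem
  ne := h.ne.symm
  vertices_eq := by rw [h.vertices_eq, insert_comm]
  edges_eq := by rw [h.edges_eq, insert_comm]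

variable (h : IsEdgeEnlargement H H' e0 x y)
include h

theorem left_mem : x ∈ H'.V := by
  simp [h.vertices_eq]

theorem sdiff_eq_insert_insert {S : Finset α} (hxS : x ∉ S) (hyS : y ∉ S) :
    H'.V \ S = insert x (insert y (H.V \ S)) := by
  rw [h.vertices_eq, insert_sdiff_of_notMem _ hxS, insert_sdiff_of_notMem _ hyS]

theorem sdiff_insert_insert (S : Finset α) :
    H'.V \ insert x (insert y S) = H.V \ S := by
  rw [h.vertices_eq, insert_sdiff_insert,
    sdiff_insert_of_notMem (by simp [h.ne, h.left_notMem]), insert_sdiff_insert,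
    sdiff_insert_of_notMem h.right_notMem]

theorem fills_insert_left_iff {M : Finset α} (hyM : y ∉ M) :
    Fills H' (insert x M) ↔ Fills H M := by
  have hx_notMem {e} (he : e ∈ H.E) : x ∉ e := fun hxe => h.left_notMem (H.edge_subset e he hxe)
  have hy_not_sub : ¬ insert y e0 ⊆ insert x M := fun hsub => by
    simpa [h.ne.symm, hyM] using hsub (mem_insert_self y e0)
  simp only [Fills, h.edges_eq, exists_mem_insert, mem_erase, and_assoc,
    insert_subset_insert_iff (hx_notMem h.mem_edges), hy_not_sub, false_or]
  constructor
  · rintro (he0M | ⟨e, -, he, heM⟩)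
    · exact ⟨e0, h.mem_edges, he0M⟩
    · exact ⟨e, he, (subset_insert_iff_of_notMem (hx_notMem he)).1 heM⟩
  · rintro ⟨e, he, heM⟩
    by_cases hee0 : e = e0
    · exact Or.inl (hee0 ▸ heM)
    · exact Or.inr ⟨e, hee0, he, heM.trans (subset_insert x M)⟩

theorem makerAux_insert_insert_iff {n : ℕ} {M B : Finset α} {b : Bool} (hyM : y ∉ M) :
    makerAux H' n (insert x M) (insert y B) b ↔ makerAux H n M B b := by
  induction n generalizing M B b with
  | zero => exact h.fills_insert_left_iff hyM
  | succ n ih =>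
    have hfree : H'.V \ (insert x M ∪ insert y B) = H.V \ (M ∪ B) := by
      rw [insert_union, union_insert, h.sdiff_insert_insert]
    cases b with
    | false =>
      simp only [makerAux, hfree]
      refine forall₂_congr fun v _ => ?_
      rw [insert_comm]
      exact ih hyM
    | true =>
      simp only [makerAux, hfree]
      refine exists_congr fun v => and_congr_right fun hv => ?_
      have hyvM : y ∉ insert v M := by
        simp only [mem_insert, not_or]
        exact ⟨fun hyv => h.right_notMem (hyv ▸ (mem_sdiff.1 hv).1), hyM⟩
      rw [insert_comm]
      exact ih hyvM

theorem makerAux_of_makerAux_insert_left {n : ℕ} {M B : Finset α} (hyM : y ∉ M) (hyB : y ∉ B)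
    (hwin : makerAux H' (n + 1) (insert x M) B false) : makerAux H n M B true :=
  (h.makerAux_insert_insert_iff hyM).1 <|
    hwin y (mem_sdiff.2 ⟨h.symm.left_mem, by simp [h.ne.symm, hyM, hyB]⟩)

theorem makerAux_insert_right_of_makerAux {n : ℕ} {M B : Finset α} (hxM : x ∉ M) (hxB : x ∉ B)
    (hyM : y ∉ M) (hwin : makerAux H n M B false) : makerAux H' (n + 1) M (insert y B) true :=
  ⟨x, mem_sdiff.2 ⟨h.left_mem, by simp [h.ne, hxM, hxB]⟩,
    (h.makerAux_insert_insert_iff hyM).2 hwin⟩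

theorem makerAux_two_iff {M B : Finset α} {b : Bool} (hxMB : x ∉ M ∪ B) (hyMB : y ∉ M ∪ B)
    (hF : H.V \ (M ∪ B) = ∅) : makerAux H' 2 M B b ↔ Fills H M := by
  obtain ⟨hxM, hxB⟩ := not_or.1 (mem_union.not.1 hxMB)
  obtain ⟨hyM, hyB⟩ := not_or.1 (mem_union.not.1 hyMB)
  have hfree := h.sdiff_eq_insert_insert hxMB hyMB
  rw [hF] at hfree
  cases b with
  | true =>
    rw [makerAux.eq_2, hfree, exists_mem_insert, exists_mem_insert]
    constructor
    · rintro (hPx | hPy | ⟨u, hu, -⟩)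
      · exact h.makerAux_of_makerAux_insert_left hyM hyB hPx
      · exact h.symm.makerAux_of_makerAux_insert_left hxM hxB hPy
      · exact absurd hu (notMem_empty u)
    · exact fun hM => Or.inl fun _ _ => (h.fills_insert_left_iff hyM).2 hM
  | false =>
    rw [makerAux.eq_3, hfree, forall_mem_insert, forall_mem_insert]
    constructor
    · rintro ⟨⟨u, hu, hwin⟩, -, -⟩
      -- after Breaker takes `x`, only `y` is left for Maker
      rw [union_insert, sdiff_insert, hfree, erase_insert (by simp [h.ne]), insert_empty,
        mem_singleton] at hu
      exact (h.symm.fills_insert_left_iff hxM).1 (hu ▸ hwin)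
    · exact fun hM => ⟨h.symm.makerAux_insert_right_of_makerAux hyM hyB hxM hM,
        h.makerAux_insert_right_of_makerAux hxM hxB hyM hM, fun v hv => absurd hv (notMem_empty v)⟩

theorem makerAux_add_two_iff {n : ℕ} {M B : Finset α} {b : Bool} (hxMB : x ∉ M ∪ B)
    (hyMB : y ∉ M ∪ B) (hn : (H.V \ (M ∪ B)).card = n) :
    makerAux H' (n + 2) M B b ↔ makerAux H n M B b := by
  induction n generalizing M B b with
  | zero => exact h.makerAux_two_iff hxMB hyMB (card_eq_zero.1 hn)
  | succ n ih =>
    obtain ⟨hxM, hxB⟩ := not_or.1 (mem_union.not.1 hxMB)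
    obtain ⟨hyM, hyB⟩ := not_or.1 (mem_union.not.1 hyMB)
    have ih' {u : α} {M' B' : Finset α} {b' : Bool} (hu : u ∈ H.V \ (M ∪ B))
        (hMB' : M' ∪ B' = insert u (M ∪ B)) :
        makerAux H' (n + 2) M' B' b' ↔ makerAux H n M' B' b' := by
      have huH := (mem_sdiff.1 hu).1
      refine ih ?_ ?_ ?_ <;> rw [hMB']
      · exact fun hx' => (mem_insert.1 hx').elim (fun hxu => h.left_notMem (hxu ▸ huH)) hxMB
      · exact fun hy' => (mem_insert.1 hy').elim (fun hyu => h.right_notMem (hyu ▸ huH)) hyMB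
      · rw [sdiff_insert, card_erase_of_mem hu, hn, Nat.add_sub_cancel]
    cases b with
    | true =>
      rw [makerAux.eq_2, h.sdiff_eq_insert_insert hxMB hyMB, exists_mem_insert, exists_mem_insert]
      constructor
      · rintro (hPx | hPy | ⟨u, hu, hPu⟩)
        · exact h.makerAux_of_makerAux_insert_left hyM hyB hPx
        · exact h.symm.makerAux_of_makerAux_insert_left hxM hxB hPy
        · exact ⟨u, hu, (ih' hu (insert_union ..)).1 hPu⟩
      · rintro ⟨u, hu, hRu⟩
        exact Or.inr (Or.inr ⟨u, hu, (ih' hu (insert_union ..)).2 hRu⟩)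
    | false =>
      rw [makerAux.eq_3, h.sdiff_eq_insert_insert hxMB hyMB, forall_mem_insert, forall_mem_insert]
      constructor
      · exact fun ⟨_, _, hP⟩ v hv => (ih' hv (union_insert ..)).1 (hP v hv)
      · exact fun hR => ⟨h.symm.makerAux_insert_right_of_makerAux hyM hyB hxM hR,
          h.makerAux_insert_right_of_makerAux hxM hxB hyM hR,
          fun v hv => (ih' hv (union_insert ..)).2 (hR v hv)⟩

end IsEdgeEnlargement

/-- (Lemma 1 of the paper.) Let `e0 ∈ E(H)`, and let `H'` be obtained from
`H` by adding two new vertices `x` and `y` and replacing the edge `e0` by the two edges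
`e0 ∪ {x}` and `e0 ∪ {y}`.  Then Maker wins the Maker-Breaker game on `H` iff Maker wins
the Maker-Breaker game on `H'`. -/
theorem makerWin_enlarge_edge (H H' : FinHypergraph α) (e0 : Finset α) (he0 : e0 ∈ H.E)
    (x y : α) (hx : x ∉ H.V) (hy : y ∉ H.V) (hxy : x ≠ y)
    (hV : H'.V = insert x (insert y H.V))
    (hE : H'.E = insert (insert x e0) (insert (insert y e0) (H.E.erase e0))) :
    MakerWin H ↔ MakerWin H' := by
  have h : IsEdgeEnlargement H H' e0 x y := ⟨he0, hx, hy, hxy, hV, hE⟩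
  have hcard : H'.V.card = H.V.card + 2 := by
    rw [hV, Finset.card_insert_of_notMem (by simp [hx, hxy]), Finset.card_insert_of_notMem hy]
  rw [MakerWin, MakerWin, hcard]
  exact (h.makerAux_add_two_iff (by simp) (by simp) (by simp)).symm
end

section
/- Let H be a finite hypergraph and let x, y ∈ V(H) be distinct vertices such that every edge of H containing y also contains x, and such that {x, y} ∈ E(H). Let H' be the hypergraph with vertex set V(H) \ {x, y} and edge set { e \ {x} : e ∈ E(H), y ∉ e }. Then Maker has a winning strategy for the Maker-Breaker game on H if and only if Maker has a winning strategy for the Maker-Breaker game on H'. In other words, a first round in which Maker picks x and Breaker answers by picking y is optimal for both players. -/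
/-!
Formalization of finite positional games (Maker-Breaker and Maker-Maker) on hypergraphs.

A position of a game is recorded by the sets of vertices picked by each player so far,
together with a fuel parameter equal to the number of vertices still unpicked, and a
Boolean recording whose turn it is (`true` = the first player, i.e. Maker/FP, to move).
The predicates below express, by recursion on the number of remaining moves, that the
corresponding player has a winning (resp. drawing) strategy from the given position.
-/

variable {α : Type} [DecidableEq α]

/-!
Maker opens with `x`; if Breaker does not answer `y`, Maker takes `y` and owns the edge
`{x, y}`. Conversely, suppose Maker wins `H` by opening with `a`. For `a = x` Breaker's reply `y`
gives `H'`. For `a = y` Breaker replies `x`, after which `y` is worthless to Maker, since every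
edge through `y` contains `x`: this is as good for her as owning `x` with Breaker owning `y`.
For any other `a`, Maker opens with `a` in `H'` as well, each reply `b` of Breaker is also a reply
in `H`, and the claim for the smaller position after `a` and `b` closes the induction on the
number of free vertices.
-/

theorem Fills.mono {H : FinHypergraph α} {M M' : Finset α} (hM : Fills H M) (h : M ⊆ M') :
    Fills H M' :=
  let ⟨e, he, heM⟩ := hM
  ⟨e, he, heM.trans h⟩

theorem Finset.sdiff_insert_union (V M B : Finset α) (z : α) :
    V \ (insert z M ∪ B) = (V \ (M ∪ B)).erase z := by
  rw [Finset.insert_union, Finset.sdiff_insert]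

theorem Finset.sdiff_union_insert (V M B : Finset α) (z : α) :
    V \ (M ∪ insert z B) = (V \ (M ∪ B)).erase z := by
  rw [Finset.union_insert, Finset.sdiff_insert]

theorem Finset.sdiff_insert_union_insert (V M B : Finset α) (a b : α) :
    V \ (insert a M ∪ insert b B) = ((V \ (M ∪ B)).erase b).erase a := by
  rw [Finset.sdiff_insert_union, Finset.sdiff_union_insert]

theorem Finset.mem_sdiff_insert_union_insert {V M B : Finset α} {a b z : α} :
    z ∈ V \ (insert a M ∪ insert b B) ↔ z ≠ a ∧ z ≠ b ∧ z ∈ V \ (M ∪ B) := by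
  rw [Finset.sdiff_insert_union_insert, Finset.mem_erase, Finset.mem_erase]

theorem Finset.card_sdiff_insert_union_insert {V M B : Finset α} {a b : α} (hab : a ≠ b)
    (ha : a ∈ V \ (M ∪ B)) (hb : b ∈ V \ (M ∪ B)) :
    (V \ (insert a M ∪ insert b B)).card + 2 = (V \ (M ∪ B)).card := by
  rw [Finset.sdiff_insert_union_insert, ← Finset.card_erase_add_one hb,
    ← Finset.card_erase_add_one (Finset.mem_erase.mpr ⟨hab, ha⟩)]

theorem makerAux_of_fills {H : FinHypergraph α} {n : ℕ} {M B : Finset α} {c : Bool}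
    (hM : Fills H M) (hn : n ≤ (H.V \ (M ∪ B)).card) : makerAux H n M B c := by
  induction n generalizing M B c with
  | zero => cases c <;> exact hM
  | succ n ih =>
    cases c with
    | true =>
      obtain ⟨z, hz⟩ : (H.V \ (M ∪ B)).Nonempty := Finset.card_pos.mp (by omega)
      refine ⟨z, hz, ih (hM.mono (Finset.subset_insert z M)) ?_⟩
      rw [Finset.sdiff_insert_union, Finset.card_erase_of_mem hz]
      omega
    | false =>
      intro z hz
      refine ih hM ?_
      rw [Finset.sdiff_union_insert, Finset.card_erase_of_mem hz]
      omega

theorem makerAux_transfer {H₁ H₂ : FinHypergraph α} {n : ℕ} {M₁ B₁ M₂ B₂ : Finset α} {c : Bool}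
    (hfree : H₁.V \ (M₁ ∪ B₁) = H₂.V \ (M₂ ∪ B₂)) (hdisj : Disjoint M₁ B₁)
    (hedges : ∀ e ∈ H₁.E, Disjoint B₁ e → ∃ e' ∈ H₂.E, Disjoint B₂ e' ∧ e' \ M₂ ⊆ e \ M₁)
    (h : makerAux H₁ n M₁ B₁ c) : makerAux H₂ n M₂ B₂ c := by
  induction n generalizing M₁ B₁ M₂ B₂ c with
  | zero =>
    obtain ⟨e, he, heM⟩ : Fills H₁ M₁ := by cases c <;> exact h
    obtain ⟨e', he', -, hsub⟩ := hedges e he (hdisj.symm.mono_right heM)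
    rw [Finset.sdiff_eq_empty_iff_subset.mpr heM, Finset.subset_empty,
      Finset.sdiff_eq_empty_iff_subset] at hsub
    have hfills : Fills H₂ M₂ := ⟨e', he', hsub⟩
    cases c <;> exact hfills
  | succ n ih =>
    cases c with
    | true =>
      obtain ⟨z, hz, h⟩ := h
      have hzB₁ : z ∉ B₁ := (Finset.mem_sdiff.mp hz).2 ∘ Finset.mem_union_right M₁
      refine ⟨z, hfree ▸ hz, ih ?_ (Finset.disjoint_insert_left.mpr ⟨hzB₁, hdisj⟩) ?_ h⟩
      · rw [Finset.sdiff_insert_union, Finset.sdiff_insert_union, hfree]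
      · intro e he hB
        obtain ⟨e', he', hB', hsub⟩ := hedges e he hB
        refine ⟨e', he', hB', ?_⟩
        rw [Finset.sdiff_insert, Finset.sdiff_insert]
        exact Finset.erase_subset_erase z hsub
    | false =>
      intro z hz
      have hzM₁ : z ∉ M₁ := (Finset.mem_sdiff.mp (hfree ▸ hz)).2 ∘ Finset.mem_union_left B₁
      have hzM₂ : z ∉ M₂ := (Finset.mem_sdiff.mp hz).2 ∘ Finset.mem_union_left B₂
      refine ih ?_ (Finset.disjoint_insert_right.mpr ⟨hzM₁, hdisj⟩) ?_ (h z (hfree ▸ hz))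
      · rw [Finset.sdiff_union_insert, Finset.sdiff_union_insert, hfree]
      · intro e he hB
        rw [Finset.disjoint_insert_left] at hB
        obtain ⟨e', he', hB', hsub⟩ := hedges e he hB.2
        refine ⟨e', he', Finset.disjoint_insert_left.mpr ⟨fun hze => hB.1 ?_, hB'⟩, hsub⟩
        exact (Finset.mem_sdiff.mp (hsub (Finset.mem_sdiff.mpr ⟨hze, hzM₂⟩))).1

theorem makerAux_swap {H : FinHypergraph α} {n : ℕ} {M B : Finset α} {c : Bool} {x y : α}
    (hxy : x ≠ y) (hcover : ∀ e ∈ H.E, y ∈ e → x ∈ e) (hdisj : Disjoint M B) (hxM : x ∉ M)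
    (hyB : y ∉ B) (h : makerAux H n (insert y M) (insert x B) c) :
    makerAux H n (insert x M) (insert y B) c := by
  refine makerAux_transfer ?_ ?_ ?_ h
  · congr 1
    ext v
    simp only [Finset.mem_union, Finset.mem_insert]
    tauto
  · simp [Finset.disjoint_insert_left, Finset.disjoint_insert_right, hxy, hyB, hxM, hdisj]
  · intro e he hB
    rw [Finset.disjoint_insert_left] at hB
    have hye : y ∉ e := fun hy => hB.1 (hcover e he hy)
    refine ⟨e, he, Finset.disjoint_insert_left.mpr ⟨hye, hB.2⟩, ?_⟩
    rw [Finset.sdiff_insert, Finset.sdiff_insert, Finset.erase_eq_of_notMem (by simp [hB.1]),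
      Finset.erase_eq_of_notMem (by simp [hye])]

theorem makerAux_of_greedy_round {H : FinHypergraph α} {n : ℕ} {M B : Finset α} {x y : α}
    (hxy : x ≠ y) (hedge : Fills H (insert x (insert y M))) (hx : x ∈ H.V \ (M ∪ B))
    (hy : y ∈ H.V \ (M ∪ B)) (hcard : (H.V \ (M ∪ B)).card = n + 2)
    (h : makerAux H n (insert x M) (insert y B) true) : makerAux H (n + 2) M B true := by
  refine ⟨x, hx, fun b hb => ?_⟩
  rcases eq_or_ne b y with rfl | hby
  · exact h
  rw [Finset.sdiff_insert_union, Finset.mem_erase] at hb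
  have hy' : y ∈ H.V \ (insert x M ∪ insert b B) :=
    Finset.mem_sdiff_insert_union_insert.mpr ⟨hxy.symm, hby.symm, hy⟩
  have hcard' := Finset.card_sdiff_insert_union_insert hb.1.symm hx hb.2
  obtain ⟨m, rfl⟩ : ∃ m, n = m + 1 :=
    Nat.exists_eq_add_one.mpr (by have := Finset.card_pos.mpr ⟨y, hy'⟩; omega)
  refine ⟨y, hy', makerAux_of_fills (hedge.mono (Finset.insert_comm x y M).subset) ?_⟩
  rw [Finset.sdiff_insert_union, Finset.card_erase_of_mem hy']
  omega

theorem makerAux_insert_of_makerAux_one {H : FinHypergraph α} {M B : Finset α} {y : α}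
    (hy : y ∈ H.V \ (M ∪ B)) (hcard : (H.V \ (M ∪ B)).card ≤ 1) (h : makerAux H 1 M B true) :
    makerAux H 0 (insert y M) B false := by
  obtain ⟨z, hz, hfill⟩ := h
  obtain rfl : z = y := Finset.card_le_one.mp hcard z hz y hy
  exact hfill

theorem makerAux_greedy_round_of_makerAux {H : FinHypergraph α} {x y : α} (hxy : x ≠ y)
    (hcover : ∀ e ∈ H.E, y ∈ e → x ∈ e) (n : ℕ) {M B : Finset α} (hdisj : Disjoint M B)
    (hx : x ∈ H.V \ (M ∪ B)) (hy : y ∈ H.V \ (M ∪ B)) (hcard : (H.V \ (M ∪ B)).card = n + 2)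
    (h : makerAux H (n + 2) M B true) : makerAux H n (insert x M) (insert y B) true := by
  induction n using Nat.strong_induction_on generalizing M B with
  | _ n ih =>
  obtain ⟨a, ha, hwin⟩ := h
  have hxM : x ∉ M := (Finset.mem_sdiff.mp hx).2 ∘ Finset.mem_union_left B
  have hyB : y ∉ B := (Finset.mem_sdiff.mp hy).2 ∘ Finset.mem_union_right M
  have haB : a ∉ B := (Finset.mem_sdiff.mp ha).2 ∘ Finset.mem_union_right M
  have hafter_a : ∀ v, v ≠ a → v ∈ H.V \ (M ∪ B) → v ∈ H.V \ (insert a M ∪ B) :=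
    fun v hva hv => by rw [Finset.sdiff_insert_union]; exact Finset.mem_erase.mpr ⟨hva, hv⟩
  rcases eq_or_ne a x with rfl | hax
  · exact hwin y (hafter_a y hxy.symm hy)
  rcases eq_or_ne a y with rfl | hay
  · exact makerAux_swap hxy hcover hdisj hxM hyB (hwin x (hafter_a x hxy hx))
  have ha' : a ∈ H.V \ (insert x M ∪ insert y B) :=
    Finset.mem_sdiff_insert_union_insert.mpr ⟨hax, hay, ha⟩
  have hcard' := Finset.card_sdiff_insert_union_insert hxy hx hy
  obtain ⟨m, rfl⟩ : ∃ m, n = m + 1 :=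
    Nat.exists_eq_add_one.mpr (by have := Finset.card_pos.mpr ⟨a, ha'⟩; omega)
  refine ⟨a, ha', ?_⟩
  rcases m with _ | m
  · -- only `a`, `x`, `y` were free: Breaker's reply `x` to `a` leaves Maker just `y`
    have hcard_ax := Finset.card_sdiff_insert_union_insert hax ha hx
    have hya := Finset.mem_sdiff_insert_union_insert.mpr ⟨hay.symm, hxy.symm, hy⟩
    rw [Finset.insert_comm a x]
    exact makerAux_swap hxy hcover (Finset.disjoint_insert_left.mpr ⟨haB, hdisj⟩)
      (by simp [hax.symm, hxM]) hyB
      (makerAux_insert_of_makerAux_one hya (by omega) (hwin x (hafter_a x hax.symm hx)))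
  · intro b hb
    rw [Finset.sdiff_insert_union, Finset.mem_erase, Finset.mem_sdiff_insert_union_insert] at hb
    obtain ⟨hba, hbx, hby, hb⟩ := hb
    have hbM : b ∉ M := (Finset.mem_sdiff.mp hb).2 ∘ Finset.mem_union_left B
    have hdisj' : Disjoint (insert a M) (insert b B) := by
      simp [Finset.disjoint_insert_left, Finset.disjoint_insert_right, hba, haB, hbM, hdisj]
    have hcard_ab := Finset.card_sdiff_insert_union_insert hba.symm ha hb
    have hround := ih m (by omega) hdisj'
      (Finset.mem_sdiff_insert_union_insert.mpr ⟨hax.symm, hbx.symm, hx⟩)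
      (Finset.mem_sdiff_insert_union_insert.mpr ⟨hay.symm, hby.symm, hy⟩) (by omega)
      (hwin b (hafter_a b hba hb))
    rwa [Finset.insert_comm a x, Finset.insert_comm b y]

theorem makerAux_pair_iff {H H' : FinHypergraph α} {x y : α} (hxy : x ≠ y)
    (hV : H'.V = H.V \ {x, y})
    (hE : H'.E = (H.E.filter (fun e => y ∉ e)).image (fun e => e.erase x)) {n : ℕ} {c : Bool} :
    makerAux H n {x} {y} c ↔ makerAux H' n ∅ ∅ c := by
  have hfree : H.V \ ({x} ∪ {y}) = H'.V \ (∅ ∪ ∅) := by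
    rw [hV, Finset.empty_union, Finset.sdiff_empty, ← Finset.insert_eq]
  constructor
  · refine makerAux_transfer hfree (Finset.disjoint_singleton.mpr hxy) fun e he hye =>
      ⟨e.erase x, ?_, Finset.disjoint_empty_left _, by rw [Finset.sdiff_empty, Finset.erase_eq]⟩
    rw [hE]
    exact Finset.mem_image_of_mem _
      (Finset.mem_filter.mpr ⟨he, Finset.disjoint_singleton_left.mp hye⟩)
  · refine makerAux_transfer hfree.symm (Finset.disjoint_empty_left _) fun e' he' _ => ?_
    rw [hE, Finset.mem_image] at he'
    obtain ⟨e, he, rfl⟩ := he'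
    rw [Finset.mem_filter] at he
    exact ⟨e, he.1, Finset.disjoint_singleton_left.mpr he.2,
      by rw [Finset.sdiff_empty, Finset.erase_eq]⟩

/-- (Greedy move for Maker-Breaker.) Let `x ≠ y` be vertices of `H` such
that every edge containing `y` also contains `x`, and `{x, y} ∈ E(H)`.  Let `H'` be the
updated hypergraph after Maker picks `x` and Breaker picks `y`: its vertex set is
`V(H) \ {x, y}` and its edges are the sets `e \ {x}` for `e ∈ E(H)` with `y ∉ e`.
Then Maker wins the Maker-Breaker game on `H` iff Maker wins it on `H'`; in other words,
this first round of play is optimal for both players. -/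
theorem makerWin_greedy_move (H H' : FinHypergraph α) (x y : α)
    (hx : x ∈ H.V) (hy : y ∈ H.V) (hxy : x ≠ y)
    (hcover : ∀ e ∈ H.E, y ∈ e → x ∈ e)
    (hedge : ({x, y} : Finset α) ∈ H.E)
    (hV : H'.V = H.V \ {x, y})
    (hE : H'.E = (H.E.filter (fun e => y ∉ e)).image (fun e => e.erase x)) :
    MakerWin H ↔ MakerWin H' := by
  have hpair : ({x, y} : Finset α) ⊆ H.V :=
    Finset.insert_subset hx (Finset.singleton_subset_iff.mpr hy)
  have hpair_card := Finset.card_pair hxy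
  obtain ⟨n, hn⟩ : ∃ n, H.V.card = n + 2 :=
    ⟨H.V.card - 2, by have := Finset.card_le_card hpair; omega⟩
  have hn' : H'.V.card = n := by
    rw [hV, Finset.card_sdiff_of_subset hpair, hpair_card, hn]
    rfl
  unfold MakerWin
  rw [hn, hn', ← makerAux_pair_iff hxy hV hE]
  have hfree : H.V \ (∅ ∪ ∅) = H.V := by simp
  rw [← hfree] at hx hy hn
  exact ⟨makerAux_greedy_round_of_makerAux hxy hcover n (Finset.disjoint_empty_left _) hx hy hn,
    makerAux_of_greedy_round hxy ⟨{x, y}, hedge, subset_rfl⟩ hx hy hn⟩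
end

section
/- Let H be a finite hypergraph and let G = (F, S) be an intermediate position of the Maker-Maker game on H with FP to move, i.e., F, S ⊆ V(H) are disjoint with |F| = |S|, no edge of H is contained in F, and no edge of H is contained in S. Let x, y ∈ V(H) \ (F ∪ S) be distinct. Suppose that every updated edge of G (red or blue) containing y also contains x, and that in the position (F ∪ {x}, S) with SP to move, every SP move other than picking y leads to a position from which FP has a winning strategy. Let G' = (F ∪ {x}, S ∪ {y}). Then the position G and the position G' have the same outcome under optimal play: FP has a winning strategy from G if and only if FP has a winning strategy from G', and SP has a winning strategy from G if and only if SP has a winning strategy from G'. -/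
/-!
Formalization of finite positional games (Maker-Breaker and Maker-Maker) on hypergraphs.

A position of a game is recorded by the sets of vertices picked by each player so far,
together with a fuel parameter equal to the number of vertices still unpicked, and a
Boolean recording whose turn it is (`true` = the first player, i.e. Maker/FP, to move).
The predicates below express, by recursion on the number of remaining moves, that the
corresponding player has a winning (resp. drawing) strategy from the given position.
-/

variable {α : Type} [DecidableEq α]

/-!
Two of the four implications are immediate: from `(F, S)` FP may open with `x`, after which every
SP reply other than `y` loses. The other two rest on `y` being worthless next to `x`: every edge
that either player can still complete through `y` also contains `x`. Hence in any later position
in which FP holds `y`, exchanging `x` and `y` (relabelling by `swap x y`) can only help FP.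
By induction on the number of unpicked vertices, FP's winning strategy from `(F, S)` then wins
from `(F ∪ {x}, S ∪ {y})` once the pair `x`/`y` is inserted where the strategy first picks `x`
or `y` (if it picks `y`, the exchange lets FP take `x`); symmetrically, SP's strategy from
`(F ∪ {x}, S ∪ {y})` wins from `(F, S)` by answering `x` with `y` and `y` with `x`.
-/

open Equiv Finset

namespace Finset

variable {V A B s : Finset α} {a w x y : α}

theorem map_swap_eq_self (h : x ∈ s ↔ y ∈ s) : s.map (swap x y).toEmbedding = s := by
  ext a
  rw [mem_map_equiv, symm_swap, swap_apply_def]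
  split_ifs with hax hay
  · subst hax; exact h.symm
  · subst hay; exact h
  · rfl

theorem sdiff_union_map_perm {σ : Perm α} (hV : V.map σ.toEmbedding = V) (A B : Finset α) :
    V \ (A.map σ.toEmbedding ∪ B.map σ.toEmbedding) = (V \ (A ∪ B)).map σ.toEmbedding := by
  rw [Finset.map_sdiff, map_union, hV]

theorem mem_sdiff_union_map_perm {σ : Perm α} (hV : V.map σ.toEmbedding = V)
    (hw : w ∈ V \ (A ∪ B)) : σ w ∈ V \ (A.map σ.toEmbedding ∪ B.map σ.toEmbedding) := by
  rw [sdiff_union_map_perm hV]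
  exact mem_map_of_mem _ hw

theorem mem_sdiff_union : a ∈ V \ (A ∪ B) ↔ a ∈ V ∧ a ∉ A ∧ a ∉ B := by
  rw [mem_sdiff, notMem_union]

theorem mem_sdiff_insert_union : a ∈ V \ (insert w A ∪ B) ↔ a ≠ w ∧ a ∈ V \ (A ∪ B) := by
  rw [insert_union, sdiff_insert, mem_erase]

theorem mem_sdiff_union_insert : a ∈ V \ (A ∪ insert w B) ↔ a ≠ w ∧ a ∈ V \ (A ∪ B) := by
  rw [union_insert, sdiff_insert, mem_erase]

theorem card_sdiff_insert_union {n : ℕ} (hw : w ∈ V \ (A ∪ B))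
    (hn : (V \ (A ∪ B)).card = n + 1) : (V \ (insert w A ∪ B)).card = n := by
  rw [insert_union, sdiff_insert, card_erase_of_mem hw, hn, Nat.add_sub_cancel]

theorem card_sdiff_union_insert {n : ℕ} (hw : w ∈ V \ (A ∪ B))
    (hn : (V \ (A ∪ B)).card = n + 1) : (V \ (A ∪ insert w B)).card = n := by
  rw [union_insert, sdiff_insert, card_erase_of_mem hw, hn, Nat.add_sub_cancel]

end Finset

section Basic

variable {H : FinHypergraph α}

theorem Fills.mono_s11 {A B : Finset α} (hAB : A ⊆ B) : Fills H A → Fills H B :=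
  fun ⟨e, he, heA⟩ => ⟨e, he, heA.trans hAB⟩

theorem fpAux_not_spAux {n : ℕ} {A B : Finset α} {b : Bool} :
    fpAux H n A B b → ¬ spAux H n A B b := by
  induction n generalizing A B b with
  | zero => cases b <;> simp only [fpAux, spAux] <;> tauto
  | succ n ih =>
    cases b
    · rintro (hA | ⟨hnB, hall⟩) ⟨hnA, hB | ⟨z, hz, hwin⟩⟩
      exacts [hnA hA, hnA hA, hnB hB, ih (hall z hz) hwin]
    · rintro ⟨hnB, hA | ⟨w, hw, hwin⟩⟩ (hB | ⟨hnA, hall⟩)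
      exacts [hnB hB, hnA hA, hnB hB, ih hwin (hall w hw)]

end Basic

section Relabeling

variable {H : FinHypergraph α}

def HelpsFP (H : FinHypergraph α) (σ : Perm α) (A B : Finset α) : Prop :=
  (Fills H A → Fills H (A.map σ.toEmbedding)) ∧ (Fills H (B.map σ.toEmbedding) → Fills H B)

def ClosedUnderMoves (H : FinHypergraph α) (P : Finset α → Finset α → Prop) : Prop :=
  ∀ A B, P A B → ∀ w ∈ H.V \ (A ∪ B), P (insert w A) B ∧ P A (insert w B)

variable {σ : Perm α} {P : Finset α → Finset α → Prop}

theorem fpAux_map_perm (hV : H.V.map σ.toEmbedding = H.V) (hP : ClosedUnderMoves H P)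
    (hσ : ∀ A B, P A B → HelpsFP H σ A B) {n : ℕ} {A B : Finset α} {b : Bool} (hAB : P A B) :
    fpAux H n A B b → fpAux H n (A.map σ.toEmbedding) (B.map σ.toEmbedding) b := by
  induction n generalizing A B b with
  | zero =>
    obtain ⟨hA, hB⟩ := hσ A B hAB
    cases b
    · exact hA
    · exact fun h => ⟨mt hB h.1, hA h.2⟩
  | succ n ih =>
    obtain ⟨hA, hB⟩ := hσ A B hAB
    cases b
    · rintro (hwin | ⟨hnB, hall⟩)
      · exact Or.inl (hA hwin)
      refine Or.inr ⟨mt hB hnB, fun z hz => ?_⟩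
      rw [sdiff_union_map_perm hV] at hz
      obtain ⟨w, hw, rfl⟩ := mem_map.1 hz
      have hAw := (hP A B hAB w hw).2
      rw [← map_insert]
      exact ih hAw (hall w hw)
    · rintro ⟨hnB, hwin | ⟨w, hw, hwin⟩⟩
      · exact ⟨mt hB hnB, Or.inl (hA hwin)⟩
      have hAw := (hP A B hAB w hw).1
      refine ⟨mt hB hnB, Or.inr ⟨σ w, mem_sdiff_union_map_perm hV hw, ?_⟩⟩
      rw [← coe_toEmbedding, ← map_insert]
      exact ih hAw hwin

theorem spAux_of_map_perm (hV : H.V.map σ.toEmbedding = H.V) (hP : ClosedUnderMoves H P)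
    (hσ : ∀ A B, P A B → HelpsFP H σ A B) {n : ℕ} {A B : Finset α} {b : Bool} (hAB : P A B) :
    spAux H n (A.map σ.toEmbedding) (B.map σ.toEmbedding) b → spAux H n A B b := by
  induction n generalizing A B b with
  | zero =>
    obtain ⟨hA, hB⟩ := hσ A B hAB
    cases b
    · exact fun h => ⟨mt hA h.1, hB h.2⟩
    · exact hB
  | succ n ih =>
    obtain ⟨hA, hB⟩ := hσ A B hAB
    cases b
    · rintro ⟨hnA, hwin | ⟨z, hz, hwin⟩⟩
      · exact ⟨mt hA hnA, Or.inl (hB hwin)⟩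
      rw [sdiff_union_map_perm hV] at hz
      obtain ⟨w, hw, rfl⟩ := mem_map.1 hz
      have hBw := (hP A B hAB w hw).2
      rw [← map_insert] at hwin
      exact ⟨mt hA hnA, Or.inr ⟨w, hw, ih hBw hwin⟩⟩
    · rintro (hwin | ⟨hnA, hall⟩)
      · exact Or.inl (hB hwin)
      refine Or.inr ⟨mt hA hnA, fun w hw => ?_⟩
      have hAw := (hP A B hAB w hw).1
      have hwin := hall (σ w) (mem_sdiff_union_map_perm hV hw)
      rw [← coe_toEmbedding, ← map_insert] at hwin
      exact ih hAw hwin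

end Relabeling

section Domination

variable {H : FinHypergraph α} {F S W : Finset α} {x y : α}

/-- For `W = S` (resp. `W = F`): every updated red (resp. blue) edge of `(F, S)` containing `y`
also contains `x`. -/
def Dominates (H : FinHypergraph α) (W : Finset α) (x y : α) : Prop :=
  ∀ e ∈ H.E, Disjoint e W → y ∈ e → x ∈ e

theorem Fills.of_insert_dominated {T : Finset α} (hd : Dominates H W x y)
    (hTW : Disjoint (insert y T) W) (hxT : x ∉ insert y T) (h : Fills H (insert y T)) :
    Fills H T := by
  obtain ⟨e, he, heT⟩ := h
  have hye : y ∉ e := fun hye => hxT (heT (hd e he (disjoint_of_subset_left heT hTW) hye))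
  exact ⟨e, he, fun a ha => (mem_insert.1 (heT ha)).resolve_left (by rintro rfl; exact hye ha)⟩

theorem closedUnderMoves_extending (F S : Finset α) (y : α) :
    ClosedUnderMoves H (fun A B => F ⊆ A ∧ S ⊆ B ∧ Disjoint A B ∧ y ∈ A) := by
  rintro A B ⟨hFA, hSB, hAB, hyA⟩ w hw
  obtain ⟨-, hwA, hwB⟩ := mem_sdiff_union.1 hw
  exact ⟨⟨hFA.trans (subset_insert w A), hSB, disjoint_insert_left.2 ⟨hwB, hAB⟩,
      mem_insert_of_mem hyA⟩,
    ⟨hFA, hSB.trans (subset_insert w B), disjoint_insert_right.2 ⟨hwA, hAB⟩, hyA⟩⟩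

theorem helpsFP_swap (hR : Dominates H S x y) (hB : Dominates H F x y) (hxF : x ∉ F)
    (hyF : y ∉ F) (A B : Finset α) :
    F ⊆ A ∧ S ⊆ B ∧ Disjoint A B ∧ y ∈ A → HelpsFP H (swap x y) A B := by
  rintro ⟨hFA, hSB, hAB, hyA⟩
  have hyB : y ∉ B := disjoint_left.1 hAB hyA
  refine ⟨fun ⟨e, he, heA⟩ => ⟨e, he, fun a ha => ?_⟩, fun ⟨e, he, heB⟩ => ⟨e, he, fun a ha => ?_⟩⟩
  · rw [mem_map_equiv, symm_swap]
    rcases eq_or_ne a x with rfl | hax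
    · rwa [swap_apply_left]
    rcases eq_or_ne a y with rfl | hay
    · rw [swap_apply_right]
      exact heA (hR e he (disjoint_of_subset_left heA (disjoint_of_subset_right hSB hAB)) ha)
    · rw [swap_apply_of_ne_of_ne hax hay]
      exact heA ha
  · have hmem : ∀ a ∈ e, swap x y a ∈ B := fun a ha => by
      simpa only [mem_map_equiv, symm_swap] using heB ha
    have hfix : ∀ a ∈ e, a ≠ x → a ≠ y → a ∈ B := fun a ha hax hay => by
      simpa only [swap_apply_of_ne_of_ne hax hay] using hmem a ha
    have hxe : x ∉ e := fun hx => hyB (by simpa only [swap_apply_left] using hmem x hx)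
    have heF : Disjoint e F := disjoint_left.2 fun a ha haF => disjoint_left.1 hAB (hFA haF)
      (hfix a ha (ne_of_mem_of_not_mem haF hxF) (ne_of_mem_of_not_mem haF hyF))
    have hye : y ∉ e := fun hy => hxe (hB e he heF hy)
    exact hfix a ha (ne_of_mem_of_not_mem ha hxe) (ne_of_mem_of_not_mem ha hye)

end Domination

section WinsFrom

variable {H : FinHypergraph α} {A B : Finset α} {w z : α}

def FPWinsFrom (H : FinHypergraph α) (A B : Finset α) (b : Bool) : Prop :=
  fpAux H (H.V \ (A ∪ B)).card A B b

def SPWinsFrom (H : FinHypergraph α) (A B : Finset α) (b : Bool) : Prop :=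
  spAux H (H.V \ (A ∪ B)).card A B b

theorem fpWinsFrom_true_iff : FPWinsFrom H A B true ↔ ¬ Fills H B ∧
    (Fills H A ∨ ∃ w ∈ H.V \ (A ∪ B), FPWinsFrom H (insert w A) B false) := by
  unfold FPWinsFrom
  rcases hn : (H.V \ (A ∪ B)).card with _ | n
  · simp [fpAux, card_eq_zero.1 hn]
  · simp only [fpAux]
    refine and_congr_right' (or_congr_right (exists_congr fun w => and_congr_right fun hw => ?_))
    rw [card_sdiff_insert_union hw hn]

theorem fpWinsFrom_false_iff : FPWinsFrom H A B false ↔ Fills H A ∨ (¬ Fills H B ∧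
    (H.V \ (A ∪ B)).Nonempty ∧ ∀ z ∈ H.V \ (A ∪ B), FPWinsFrom H A (insert z B) true) := by
  unfold FPWinsFrom
  rcases hn : (H.V \ (A ∪ B)).card with _ | n
  · simp [fpAux, card_eq_zero.1 hn]
  · have hne : (H.V \ (A ∪ B)).Nonempty := card_pos.1 (by omega)
    simp only [fpAux, hne, true_and]
    refine or_congr_right (and_congr_right' (forall₂_congr fun z hz => ?_))
    rw [card_sdiff_union_insert hz hn]

theorem spWinsFrom_true_iff : SPWinsFrom H A B true ↔ Fills H B ∨ (¬ Fills H A ∧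
    (H.V \ (A ∪ B)).Nonempty ∧ ∀ w ∈ H.V \ (A ∪ B), SPWinsFrom H (insert w A) B false) := by
  unfold SPWinsFrom
  rcases hn : (H.V \ (A ∪ B)).card with _ | n
  · simp [spAux, card_eq_zero.1 hn]
  · have hne : (H.V \ (A ∪ B)).Nonempty := card_pos.1 (by omega)
    simp only [spAux, hne, true_and]
    refine or_congr_right (and_congr_right' (forall₂_congr fun w hw => ?_))
    rw [card_sdiff_insert_union hw hn]

theorem spWinsFrom_false_iff : SPWinsFrom H A B false ↔ ¬ Fills H A ∧
    (Fills H B ∨ ∃ z ∈ H.V \ (A ∪ B), SPWinsFrom H A (insert z B) true) := by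
  unfold SPWinsFrom
  rcases hn : (H.V \ (A ∪ B)).card with _ | n
  · simp [spAux, card_eq_zero.1 hn]
  · simp only [spAux]
    refine and_congr_right' (or_congr_right (exists_congr fun z => and_congr_right fun hz => ?_))
    rw [card_sdiff_union_insert hz hn]

theorem FPWinsFrom.of_move (hnB : ¬ Fills H B) (hw : w ∈ H.V \ (A ∪ B))
    (h : FPWinsFrom H (insert w A) B false) : FPWinsFrom H A B true :=
  fpWinsFrom_true_iff.2 ⟨hnB, Or.inr ⟨w, hw, h⟩⟩

theorem FPWinsFrom.reply (h : FPWinsFrom H A B false) (hz : z ∈ H.V \ (A ∪ B))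
    (hnB : ¬ Fills H (insert z B)) : FPWinsFrom H A (insert z B) true := by
  obtain hA | ⟨-, -, hall⟩ := fpWinsFrom_false_iff.1 h
  · exact fpWinsFrom_true_iff.2 ⟨hnB, Or.inl hA⟩
  · exact hall z hz

theorem SPWinsFrom.of_reply (hnA : ¬ Fills H A) (hz : z ∈ H.V \ (A ∪ B))
    (h : SPWinsFrom H A (insert z B) true) : SPWinsFrom H A B false :=
  spWinsFrom_false_iff.2 ⟨hnA, Or.inr ⟨z, hz, h⟩⟩

end WinsFrom

section Unpicked

variable {H : FinHypergraph α} {F S A B : Finset α} {x y w : α} {b : Bool}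

structure ExtendsUnpicked (H : FinHypergraph α) (F S : Finset α) (x y : α) (A B : Finset α) :
    Prop where
  subset_left : F ⊆ A
  subset_right : S ⊆ B
  disjoint : Disjoint A B
  mem_x : x ∈ H.V \ (A ∪ B)
  mem_y : y ∈ H.V \ (A ∪ B)

theorem ExtendsUnpicked.insert_left (hp : ExtendsUnpicked H F S x y A B)
    (hw : w ∈ H.V \ (A ∪ B)) (hwx : w ≠ x) (hwy : w ≠ y) :
    ExtendsUnpicked H F S x y (insert w A) B :=
  ⟨hp.subset_left.trans (subset_insert w A), hp.subset_right,
    disjoint_insert_left.2 ⟨(mem_sdiff_union.1 hw).2.2, hp.disjoint⟩,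
    mem_sdiff_insert_union.2 ⟨hwx.symm, hp.mem_x⟩, mem_sdiff_insert_union.2 ⟨hwy.symm, hp.mem_y⟩⟩

theorem ExtendsUnpicked.insert_right (hp : ExtendsUnpicked H F S x y A B)
    (hw : w ∈ H.V \ (A ∪ B)) (hwx : w ≠ x) (hwy : w ≠ y) :
    ExtendsUnpicked H F S x y A (insert w B) :=
  ⟨hp.subset_left, hp.subset_right.trans (subset_insert w B),
    disjoint_insert_right.2 ⟨(mem_sdiff_union.1 hw).2.1, hp.disjoint⟩,
    mem_sdiff_union_insert.2 ⟨hwx.symm, hp.mem_x⟩, mem_sdiff_union_insert.2 ⟨hwy.symm, hp.mem_y⟩⟩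

theorem ExtendsUnpicked.fills_of_fills_insert_left (hp : ExtendsUnpicked H F S x y A B)
    (hR : Dominates H S x y) (hxy : x ≠ y) (h : Fills H (insert y A)) : Fills H A :=
  h.of_insert_dominated hR (disjoint_insert_left.2 ⟨fun hyS => (mem_sdiff_union.1 hp.mem_y).2.2
    (hp.subset_right hyS), disjoint_of_subset_right hp.subset_right hp.disjoint⟩)
    (by simp [hxy, (mem_sdiff_union.1 hp.mem_x).2.1])

theorem ExtendsUnpicked.fills_of_fills_insert_right (hp : ExtendsUnpicked H F S x y A B)
    (hB : Dominates H F x y) (hxy : x ≠ y) (h : Fills H (insert y B)) : Fills H B :=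
  h.of_insert_dominated hB (disjoint_insert_left.2 ⟨fun hyF => (mem_sdiff_union.1 hp.mem_y).2.1
    (hp.subset_left hyF), disjoint_of_subset_right hp.subset_left hp.disjoint.symm⟩)
    (by simp [hxy, (mem_sdiff_union.1 hp.mem_x).2.2])

theorem FPWinsFrom.of_insert_dominated (hR : Dominates H S x y) (hB : Dominates H F x y)
    (hp : ExtendsUnpicked H F S x y A B) (h : FPWinsFrom H (insert y A) B b) :
    FPWinsFrom H (insert x A) B b := by
  obtain ⟨hFA, hSB, hAB, hx, hy⟩ := hp
  have hcard : (H.V \ (insert x A ∪ B)).card = (H.V \ (insert y A ∪ B)).card := by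
    rw [insert_union, insert_union, sdiff_insert, sdiff_insert, card_erase_of_mem hx,
      card_erase_of_mem hy]
  obtain ⟨hxV, hxA, hxB⟩ := mem_sdiff_union.1 hx
  obtain ⟨hyV, hyA, hyB⟩ := mem_sdiff_union.1 hy
  have hV := map_swap_eq_self (iff_of_true hxV hyV)
  have hwin := fpAux_map_perm hV (closedUnderMoves_extending F S y)
    (helpsFP_swap hR hB (fun h => hxA (hFA h)) (fun h => hyA (hFA h)))
    ⟨hFA.trans (subset_insert y A), hSB, disjoint_insert_left.2 ⟨hyB, hAB⟩, mem_insert_self y A⟩ h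
  rw [map_insert, coe_toEmbedding, swap_apply_right, map_swap_eq_self (iff_of_false hxA hyA),
    map_swap_eq_self (iff_of_false hxB hyB)] at hwin
  unfold FPWinsFrom
  rwa [hcard]

theorem SPWinsFrom.swap_insert (hR : Dominates H S x y) (hB : Dominates H F x y) (hxy : x ≠ y)
    (hp : ExtendsUnpicked H F S x y A B) (h : SPWinsFrom H (insert x A) (insert y B) b) :
    SPWinsFrom H (insert y A) (insert x B) b := by
  obtain ⟨hFA, hSB, hAB, hx, hy⟩ := hp
  obtain ⟨hxV, hxA, hxB⟩ := mem_sdiff_union.1 hx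
  obtain ⟨hyV, hyA, hyB⟩ := mem_sdiff_union.1 hy
  have hV := map_swap_eq_self (iff_of_true hxV hyV)
  have hU : insert y A ∪ insert x B = insert x A ∪ insert y B := by
    ext; simp only [mem_union, mem_insert]; tauto
  unfold SPWinsFrom at h ⊢
  rw [hU]
  refine spAux_of_map_perm hV (closedUnderMoves_extending F S y)
    (helpsFP_swap hR hB (fun h => hxA (hFA h)) (fun h => hyA (hFA h)))
    ⟨hFA.trans (subset_insert y A), hSB.trans (subset_insert x B),
      disjoint_insert_left.2 ⟨by simp [hxy.symm, hyB], disjoint_insert_right.2 ⟨hxA, hAB⟩⟩,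
      mem_insert_self y A⟩ ?_
  rwa [map_insert, map_insert, coe_toEmbedding, swap_apply_right, swap_apply_left,
    map_swap_eq_self (iff_of_false hxA hyA), map_swap_eq_self (iff_of_false hxB hyB)]

end Unpicked

theorem FPWinsFrom.insert_insert {H : FinHypergraph α} {F S A B : Finset α} {x y : α}
    {b : Bool} (hR : Dominates H S x y) (hB : Dominates H F x y) (hxy : x ≠ y)
    (hp : ExtendsUnpicked H F S x y A B) (h : FPWinsFrom H A B b) :
    FPWinsFrom H (insert x A) (insert y B) b := by
  have hnB : ¬ Fills H B → ¬ Fills H (insert y B) := mt (hp.fills_of_fills_insert_right hB hxy)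
  have hA : Fills H A → Fills H (insert x A) := Fills.mono_s11 (subset_insert x A)
  cases b
  · obtain hwin | ⟨hnB0, -, hall⟩ := fpWinsFrom_false_iff.1 h
    · exact fpWinsFrom_false_iff.2 (Or.inl (hA hwin))
    -- FP's winning answer to `y` is either `x` itself, or shows that a third vertex is unpicked
    obtain ⟨-, hwin | ⟨w, hw, hwin⟩⟩ := fpWinsFrom_true_iff.1 (hall y hp.mem_y)
    · exact fpWinsFrom_false_iff.2 (Or.inl (hA hwin))
    obtain rfl | hwx := eq_or_ne w x
    · exact hwin
    refine fpWinsFrom_false_iff.2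
      (Or.inr ⟨hnB hnB0, ⟨w, mem_sdiff_insert_union.2 ⟨hwx, hw⟩⟩, fun z hz => ?_⟩)
    rw [mem_sdiff_insert_union, mem_sdiff_union_insert] at hz
    obtain ⟨hzx, hzy, hz⟩ := hz
    rw [insert_comm]
    exact FPWinsFrom.insert_insert hR hB hxy (hp.insert_right hz hzx hzy) (hall z hz)
  · obtain ⟨hnB0, hwin | ⟨w, hw, hwin⟩⟩ := fpWinsFrom_true_iff.1 h
    · exact fpWinsFrom_true_iff.2 ⟨hnB hnB0, Or.inl (hA hwin)⟩
    have hreply (hwin : FPWinsFrom H (insert x A) B false) :=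
      hwin.reply (mem_sdiff_insert_union.2 ⟨hxy.symm, hp.mem_y⟩) (hnB hnB0)
    obtain rfl | hwx := eq_or_ne w x
    · exact hreply hwin
    obtain rfl | hwy := eq_or_ne w y
    · exact hreply (hwin.of_insert_dominated hR hB hp)
    refine .of_move (hnB hnB0)
      (mem_sdiff_insert_union.2 ⟨hwx, mem_sdiff_union_insert.2 ⟨hwy, hw⟩⟩) ?_
    rw [insert_comm]
    exact FPWinsFrom.insert_insert hR hB hxy (hp.insert_left hw hwx hwy) hwin
termination_by (H.V \ (A ∪ B)).card
decreasing_by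
  · rw [union_insert, sdiff_insert]; exact card_erase_lt_of_mem hz
  · rw [insert_union, sdiff_insert]; exact card_erase_lt_of_mem hw

theorem SPWinsFrom.of_insert_insert {H : FinHypergraph α} {F S A B : Finset α} {x y : α}
    {b : Bool} (hR : Dominates H S x y) (hB : Dominates H F x y) (hxy : x ≠ y)
    (hp : ExtendsUnpicked H F S x y A B) (h : SPWinsFrom H (insert x A) (insert y B) b) :
    SPWinsFrom H A B b := by
  have hA : Fills H A → Fills H (insert x A) := Fills.mono_s11 (subset_insert x A)
  have hB' : Fills H (insert y B) → Fills H B := hp.fills_of_fills_insert_right hB hxy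
  cases b
  · obtain ⟨hnA, hwin | ⟨z, hz, hwin⟩⟩ := spWinsFrom_false_iff.1 h
    · exact spWinsFrom_false_iff.2 ⟨mt hA hnA, Or.inl (hB' hwin)⟩
    rw [mem_sdiff_insert_union, mem_sdiff_union_insert] at hz
    obtain ⟨hzx, hzy, hz⟩ := hz
    rw [insert_comm] at hwin
    exact .of_reply (mt hA hnA) hz
      (SPWinsFrom.of_insert_insert hR hB hxy (hp.insert_right hz hzx hzy) hwin)
  · obtain hwin | ⟨hnA, -, hall⟩ := spWinsFrom_true_iff.1 h
    · exact spWinsFrom_true_iff.2 (Or.inl (hB' hwin))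
    refine spWinsFrom_true_iff.2 (Or.inr ⟨mt hA hnA, ⟨x, hp.mem_x⟩, fun w hw => ?_⟩)
    obtain rfl | hwx := eq_or_ne w x
    · exact .of_reply hnA (mem_sdiff_insert_union.2 ⟨hxy.symm, hp.mem_y⟩) h
    obtain rfl | hwy := eq_or_ne w y
    · exact .of_reply (fun hwA => hnA (hA (hp.fills_of_fills_insert_left hR hxy hwA)))
        (mem_sdiff_insert_union.2 ⟨hxy, hp.mem_x⟩) (h.swap_insert hR hB hxy hp)
    have hwin := hall w (mem_sdiff_insert_union.2 ⟨hwx, mem_sdiff_union_insert.2 ⟨hwy, hw⟩⟩)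
    rw [insert_comm] at hwin
    exact SPWinsFrom.of_insert_insert hR hB hxy (hp.insert_left hw hwx hwy) hwin
termination_by (H.V \ (A ∪ B)).card
decreasing_by
  · rw [union_insert, sdiff_insert]; exact card_erase_lt_of_mem hz
  · rw [insert_union, sdiff_insert]; exact card_erase_lt_of_mem hw

theorem greedy_move_maker_maker_general (H : FinHypergraph α) (F S : Finset α) (x y : α)
    (hdisj : Disjoint F S) (hSok : ¬ Fills H S)
    (hx : x ∈ H.V \ (F ∪ S)) (hy : y ∈ H.V \ (F ∪ S)) (hxy : x ≠ y)
    (hred : ∀ e ∈ H.E, Disjoint e S → y ∈ e \ F → x ∈ e \ F)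
    (hblue : ∀ e ∈ H.E, Disjoint e F → y ∈ e \ S → x ∈ e \ S)
    (hforce : ∀ z ∈ H.V \ (insert x F ∪ S), z ≠ y →
      fpAux H ((H.V \ (insert x F ∪ insert z S)).card) (insert x F) (insert z S) true) :
    (fpAux H ((H.V \ (F ∪ S)).card) F S true ↔
      fpAux H ((H.V \ (insert x F ∪ insert y S)).card) (insert x F) (insert y S) true) ∧
    (spAux H ((H.V \ (F ∪ S)).card) F S true ↔
      spAux H ((H.V \ (insert x F ∪ insert y S)).card) (insert x F) (insert y S) true) := by
  obtain ⟨-, hyF, hyS⟩ := mem_sdiff_union.1 hy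
  have hR : Dominates H S x y := fun e he heS hye =>
    (mem_sdiff.1 (hred e he heS (mem_sdiff.2 ⟨hye, hyF⟩))).1
  have hB : Dominates H F x y := fun e he heF hye =>
    (mem_sdiff.1 (hblue e he heF (mem_sdiff.2 ⟨hye, hyS⟩))).1
  have hp : ExtendsUnpicked H F S x y F S := ⟨subset_rfl, subset_rfl, hdisj, hx, hy⟩
  refine ⟨⟨FPWinsFrom.insert_insert hR hB hxy hp, fun h => ?_⟩,
    ⟨fun h => ?_, SPWinsFrom.of_insert_insert hR hB hxy hp⟩⟩
  · refine FPWinsFrom.of_move hSok hx (fpWinsFrom_false_iff.2 (Or.inr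
      ⟨hSok, ⟨y, mem_sdiff_insert_union.2 ⟨hxy.symm, hy⟩⟩, fun z hz => ?_⟩))
    obtain rfl | hzy := eq_or_ne z y
    exacts [h, hforce z hz hzy]
  · obtain hS | ⟨-, -, hall⟩ := spWinsFrom_true_iff.1 h
    · exact absurd hS hSok
    obtain ⟨-, hS | ⟨z, hz, hwin⟩⟩ := spWinsFrom_false_iff.1 (hall x hx)
    · exact absurd hS hSok
    obtain rfl | hzy := eq_or_ne z y
    · exact hwin
    · exact absurd hwin (fpAux_not_spAux (hforce z hz hzy))

/-- (Greedy move for Maker-Maker.) Let `(F, S)` be an intermediate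
position of the Maker-Maker game on `H` with FP to move: `F, S ⊆ V(H)` disjoint with
`|F| = |S|`, and no edge contained in `F` nor in `S`.  Let `x ≠ y` be unpicked vertices
such that every updated edge (red: `e \ F` for `e` disjoint from `S`; blue: `e \ S` for `e`
disjoint from `F`) containing `y` also contains `x`, and such that after FP picks `x`,
every SP answer other than `y` leads to a position from which FP has a winning strategy.
Then FP (resp. SP) has a winning strategy from `(F, S)` iff FP (resp. SP) has a winning
strategy from `(F ∪ {x}, S ∪ {y})` (FP to move in both positions). -/
theorem greedy_move_maker_maker (H : FinHypergraph α) (F S : Finset α) (x y : α)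
    (hF : F ⊆ H.V) (hS : S ⊆ H.V) (hdisj : Disjoint F S) (hcard : F.card = S.card)
    (hFok : ¬ Fills H F) (hSok : ¬ Fills H S)
    (hx : x ∈ H.V \ (F ∪ S)) (hy : y ∈ H.V \ (F ∪ S)) (hxy : x ≠ y)
    (hred : ∀ e ∈ H.E, Disjoint e S → y ∈ e \ F → x ∈ e \ F)
    (hblue : ∀ e ∈ H.E, Disjoint e F → y ∈ e \ S → x ∈ e \ S)
    (hforce : ∀ z ∈ H.V \ (insert x F ∪ S), z ≠ y →
      fpAux H ((H.V \ (insert x F ∪ insert z S)).card) (insert x F) (insert z S) true) :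
    (fpAux H ((H.V \ (F ∪ S)).card) F S true ↔
      fpAux H ((H.V \ (insert x F ∪ insert y S)).card) (insert x F) (insert y S) true) ∧
    (spAux H ((H.V \ (F ∪ S)).card) F S true ↔
      spAux H ((H.V \ (insert x F ∪ insert y S)).card) (insert x F) (insert y S) true) :=
  greedy_move_maker_maker_general H F S x y hdisj hSok hx hy hxy hred hblue hforce
end
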